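/- arXiv:math/0607260 — 3 statements merged into one kernel-verified Lean document; each statement's English description precedes it below -/
import Mathlib

section
/- With the reduced word (β_1,…,β_N) for the spinor variety of SO(2n) as above, and γ_i = s_{β_1}⋯s_{β_{i-1}}(β_i) the associated positive roots, one has ⟨γ_k^∨, γ_i⟩ ∈ {0,1} for all k < i. -/
noncomputable section

namespace SpinorDn

open Finset

/-- Euclidean dot product on `Fin n → ℝ`. -/
def dot {n : ℕ} (v w : Fin n → ℝ) : ℝ := ∑ u, v u * w u

/-- Orthogonal reflection in the root `β` (for `D_n` all roots have squared length `2`). -/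
def sRefl {n : ℕ} (β : Fin n → ℝ) (v : Fin n → ℝ) : Fin n → ℝ :=
  v - (2 * dot v β / dot β β) • β

/-- Standard basis vector `e_i` (0-indexed). -/
def stdE {n : ℕ} (i : ℕ) : Fin n → ℝ := fun u => if (u : ℕ) = i then 1 else 0

/-- Bourbaki simple roots of the root system `D_n`, indexed by `m ∈ [1,n]`:
`α_m = e_m - e_{m+1}` for `m < n` and `α_n = e_{n-1} + e_n` (1-indexed). -/
def simpleRoot (n m : ℕ) : Fin n → ℝ :=
  if m < n then stdE (m-1) - stdE m else stdE (n-2) + stdE (n-1)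

/-- `a_k = (k-1)(2n-k)/2`. -/
def aval (n k : ℕ) : ℕ := (k-1)*(2*n-k)/2

/-- For `i ∈ [1, n(n-1)/2]`, the unique `k` with `a_k < i ≤ a_{k+1}`. -/
def kOf (n i : ℕ) : ℕ := ((Finset.Icc 1 n).filter (fun k => aval n k < i)).card

/-- For `i = a_k + j`, the index `j`. -/
def jOf (n i : ℕ) : ℕ := i - aval n (kOf n i)

/-- Bourbaki index of the simple root `β_i` of the fixed reduced decomposition:
for `i = a_k + j` (`j ∈ [1, n-k]`), `β_i = α_{n-j}` if `j ≥ 2`, `β_i = α_n` if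
`j = 1` and `n-k` is odd, and `β_i = α_{n-1}` if `j = 1` and `n-k` is even. -/
def betaIdx (n i : ℕ) : ℕ :=
  if 2 ≤ jOf n i then n - jOf n i
  else if (n - kOf n i) % 2 = 1 then n else n - 1

/-- The simple root `β_i`. -/
def beta (n i : ℕ) : Fin n → ℝ := simpleRoot n (betaIdx n i)

/-- `word n i = s_{β_1} ∘ ⋯ ∘ s_{β_i}`, acting on the root space of `D_n`. -/
def word (n : ℕ) : ℕ → (Fin n → ℝ) → (Fin n → ℝ)
  | 0 => id
  | i+1 => word n i ∘ sRefl (beta n (i+1))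

/-- The positive roots `γ_i = s_{β_1} ⋯ s_{β_{i-1}}(β_i)`. -/
def gammaRoot (n i : ℕ) : Fin n → ℝ := word n (i-1) (beta n i)

/-- Coroot pairing `⟨a^∨, b⟩ = 2⟨a,b⟩/⟨a,a⟩`. -/
def cpair {n : ℕ} (a b : Fin n → ℝ) : ℝ := 2 * dot a b / dot a a

end SpinorDn

section Part1
namespace SpinorDn
variable {n : ℕ}

lemma dot_stdE (a b : ℕ) (hb : b < n) :
    dot (stdE a) (stdE b : Fin n → ℝ) = if a = b then 1 else 0 := by
  rw [dot, Finset.sum_eq_single ⟨b, hb⟩]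
  · simp only [stdE]
    by_cases h : a = b <;> simp [h, eq_comm]
  · intro u _ hu
    have : (u : ℕ) ≠ b := fun h => hu (Fin.ext h)
    simp [stdE, this]
  · simp

lemma dot_add_left (v w x : Fin n → ℝ) : dot (v + w) x = dot v x + dot w x := by
  simp [dot, add_mul, Finset.sum_add_distrib]

lemma dot_add_right (v w x : Fin n → ℝ) : dot v (w + x) = dot v w + dot v x := by
  simp [dot, mul_add, Finset.sum_add_distrib]

lemma dot_sub_left (v w x : Fin n → ℝ) : dot (v - w) x = dot v x - dot w x := by
  simp [dot, sub_mul, Finset.sum_sub_distrib]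

lemma dot_sub_right (v w x : Fin n → ℝ) : dot v (w - x) = dot v w - dot v x := by
  simp [dot, mul_sub, Finset.sum_sub_distrib]

lemma dot_smul_left (r : ℝ) (v w : Fin n → ℝ) : dot (r • v) w = r * dot v w := by
  simp [dot, Finset.mul_sum, mul_assoc]

lemma dot_smul_right (r : ℝ) (v w : Fin n → ℝ) : dot v (r • w) = r * dot v w := by
  simp [dot, Finset.mul_sum]; ring_nf
  exact Finset.sum_congr rfl (fun u _ => by ring)

end SpinorDn
end Part1
section Part2
namespace SpinorDn
variable {n : ℕ}

lemma dot_stdE_stdE_self (a : ℕ) (ha : a < n) : dot (stdE a) (stdE a : Fin n → ℝ) = 1 := by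
  rw [dot_stdE a a ha]; simp

lemma dot_stdE_stdE_ne (a b : ℕ) (hb : b < n) (h : a ≠ b) :
    dot (stdE a) (stdE b : Fin n → ℝ) = 0 := by
  rw [dot_stdE a b hb]; simp [h]

lemma simpleRoot_A (m : ℕ) (hm : m < n) :
    simpleRoot n m = (stdE (m-1) - stdE m : Fin n → ℝ) := by
  simp [simpleRoot, hm]

lemma simpleRoot_D : simpleRoot n n = (stdE (n-2) + stdE (n-1) : Fin n → ℝ) := by
  simp [simpleRoot]

lemma dot_A_self (m : ℕ) (hm1 : 1 ≤ m) (hm : m < n) :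
    dot (simpleRoot n m) (simpleRoot n m) = 2 := by
  rw [simpleRoot_A m hm, dot_sub_left, dot_sub_right, dot_sub_right,
    dot_stdE_stdE_self _ (by omega), dot_stdE_stdE_self _ hm,
    dot_stdE_stdE_ne _ _ hm (by omega), dot_stdE_stdE_ne _ _ (by omega : m-1 < n) (by omega)]
  ring

lemma dot_D_self (hn : 2 ≤ n) : dot (simpleRoot n n) (simpleRoot n n) = 2 := by
  rw [simpleRoot_D, dot_add_left, dot_add_right, dot_add_right,
    dot_stdE_stdE_self _ (by omega), dot_stdE_stdE_self (n-1) (by omega : n-1 < n),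
    dot_stdE_stdE_ne _ _ (by omega : n-1 < n) (by omega),
    dot_stdE_stdE_ne _ _ (by omega : n-2 < n) (by omega)]
  ring

lemma sRefl_eval (β v : Fin n → ℝ) (h2 : dot β β = 2) :
    sRefl β v = v - (dot v β) • β := by
  rw [sRefl, h2]
  norm_num

lemma sRefl_A_fix (m c : ℕ) (hm1 : 1 ≤ m) (hm : m < n) (h1 : c ≠ m-1) (h2 : c ≠ m) :
    sRefl (simpleRoot n m) (stdE c) = (stdE c : Fin n → ℝ) := by
  rw [sRefl_eval _ _ (dot_A_self m hm1 hm), simpleRoot_A m hm, dot_sub_right,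
    dot_stdE_stdE_ne _ _ (by omega : m-1 < n) h1, dot_stdE_stdE_ne _ _ hm h2]
  simp

lemma sRefl_A_up (m : ℕ) (hm1 : 1 ≤ m) (hm : m < n) :
    sRefl (simpleRoot n m) (stdE (m-1)) = (stdE m : Fin n → ℝ) := by
  rw [sRefl_eval _ _ (dot_A_self m hm1 hm), simpleRoot_A m hm, dot_sub_right,
    dot_stdE_stdE_self _ (by omega : m-1 < n), dot_stdE_stdE_ne _ _ hm (by omega)]
  norm_num [sub_sub_cancel]

lemma sRefl_A_down (m : ℕ) (hm1 : 1 ≤ m) (hm : m < n) :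
    sRefl (simpleRoot n m) (stdE m) = (stdE (m-1) : Fin n → ℝ) := by
  rw [sRefl_eval _ _ (dot_A_self m hm1 hm), simpleRoot_A m hm, dot_sub_right,
    dot_stdE_stdE_self _ hm, dot_stdE_stdE_ne _ _ (by omega : m-1 < n) (by omega)]
  norm_num [sub_sub_cancel]

lemma sRefl_D_fix (c : ℕ) (hn : 2 ≤ n) (h1 : c ≠ n-2) (h2 : c ≠ n-1) :
    sRefl (simpleRoot n n) (stdE c) = (stdE c : Fin n → ℝ) := by
  rw [sRefl_eval _ _ (dot_D_self hn), simpleRoot_D, dot_add_right,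
    dot_stdE_stdE_ne _ _ (by omega : n-2 < n) h1, dot_stdE_stdE_ne _ _ (by omega : n-1 < n) h2]
  simp

lemma sRefl_D_a (hn : 2 ≤ n) :
    sRefl (simpleRoot n n) (stdE (n-2)) = (-stdE (n-1) : Fin n → ℝ) := by
  rw [sRefl_eval _ _ (dot_D_self hn), simpleRoot_D, dot_add_right,
    dot_stdE_stdE_self _ (by omega : n-2 < n),
    dot_stdE_stdE_ne _ _ (by omega : n-1 < n) (by omega)]
  norm_num

lemma sRefl_D_b (hn : 2 ≤ n) :
    sRefl (simpleRoot n n) (stdE (n-1)) = (-stdE (n-2) : Fin n → ℝ) := by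
  rw [sRefl_eval _ _ (dot_D_self hn), simpleRoot_D, dot_add_right,
    dot_stdE_stdE_self _ (by omega : n-1 < n),
    dot_stdE_stdE_ne _ _ (by omega : n-2 < n) (by omega)]
  norm_num

lemma sRefl_add (β v w : Fin n → ℝ) : sRefl β (v + w) = sRefl β v + sRefl β w := by
  funext u
  simp only [sRefl, dot_add_left, Pi.sub_apply, Pi.add_apply, Pi.smul_apply, smul_eq_mul]
  ring

lemma sRefl_sub (β v w : Fin n → ℝ) : sRefl β (v - w) = sRefl β v - sRefl β w := by
  funext u
  simp only [sRefl, dot_sub_left, Pi.sub_apply, Pi.smul_apply, smul_eq_mul]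
  ring

lemma sRefl_smul (β : Fin n → ℝ) (r : ℝ) (v : Fin n → ℝ) :
    sRefl β (r • v) = r • sRefl β v := by
  funext u
  simp only [sRefl, dot_smul_left, Pi.sub_apply, Pi.smul_apply, smul_eq_mul]
  ring

lemma word_add (i : ℕ) (v w : Fin n → ℝ) : word n i (v + w) = word n i v + word n i w := by
  induction i generalizing v w with
  | zero => rfl
  | succ i ih => simp [word, sRefl_add, ih]

lemma word_sub (i : ℕ) (v w : Fin n → ℝ) : word n i (v - w) = word n i v - word n i w := by
  induction i generalizing v w with
  | zero => rfl
  | succ i ih => simp [word, sRefl_sub, ih]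

lemma word_smul (i : ℕ) (r : ℝ) (v : Fin n → ℝ) : word n i (r • v) = r • word n i v := by
  induction i generalizing v with
  | zero => rfl
  | succ i ih => simp [word, sRefl_smul, ih]

lemma word_neg (i : ℕ) (v : Fin n → ℝ) : word n i (-v) = - word n i v := by
  have := word_smul (n := n) i (-1) v
  simpa using this

end SpinorDn
end Part2
section Part3
namespace SpinorDn

lemma aval_succ {n k : ℕ} (hk : 1 ≤ k) (hkn : k ≤ n) :
    aval n (k+1) = aval n k + (n - k) := by
  obtain ⟨a, rfl⟩ : ∃ a, k = a + 1 := ⟨k - 1, by omega⟩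
  obtain ⟨m, hm⟩ : ∃ m, n = a + 1 + m := ⟨n - (a+1), by omega⟩
  subst hm
  unfold aval
  have h1 : (a + 1 + 1 - 1) = a + 1 := by omega
  have h2 : 2 * (a + 1 + m) - (a + 1 + 1) = a + 2*m := by omega
  have h3 : (a + 1 - 1) = a := by omega
  have h4 : 2 * (a + 1 + m) - (a + 1) = a + 2*m + 1 := by omega
  have h5 : a + 1 + m - (a + 1) = m := by omega
  rw [h1, h2, h3, h4, h5]
  have : (a+1) * (a + 2*m) = a * (a + 2*m + 1) + 2 * m := by ring
  rw [this, Nat.add_mul_div_left _ _ (by norm_num : 0 < 2)]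

lemma aval_mono {n : ℕ} : ∀ {k k' : ℕ}, k' ≤ k → k ≤ n → aval n k' ≤ aval n k := by
  intro k
  induction k with
  | zero => intro k' h _; interval_cases k' ; exact le_refl _
  | succ k ih =>
    intro k' h hn
    rcases Nat.eq_or_lt_of_le h with rfl | h'
    · exact le_refl _
    · rcases Nat.eq_zero_or_pos k with rfl | hk
      · have : k' = 0 := by omega
        subst this; simp [aval]
      · calc aval n k' ≤ aval n k := ih (by omega) (by omega)
          _ ≤ aval n (k+1) := by rw [aval_succ hk (by omega)]; omega

lemma kOf_jOf_eq {n k j : ℕ} (hk : 1 ≤ k) (hk2 : k ≤ n - 1) (hj : 1 ≤ j) (hj2 : j ≤ n - k) :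
    kOf n (aval n k + j) = k ∧ jOf n (aval n k + j) = j := by
  have hn : 2 ≤ n := by omega
  have hfil : ((Finset.Icc 1 n).filter (fun k' => aval n k' < aval n k + j)) = Finset.Icc 1 k := by
    ext x
    simp only [Finset.mem_filter, Finset.mem_Icc]
    constructor
    · rintro ⟨⟨hx1, hx2⟩, hx3⟩
      refine ⟨hx1, ?_⟩
      by_contra hxk
      have h1 : aval n (k+1) ≤ aval n x := aval_mono (by omega) hx2
      rw [aval_succ hk (by omega)] at h1
      omega
    · rintro ⟨hx1, hx2⟩
      have := aval_mono (n := n) hx2 (by omega)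
      exact ⟨⟨hx1, by omega⟩, by omega⟩
  have hkOf : kOf n (aval n k + j) = k := by
    rw [kOf, hfil, Nat.card_Icc]; omega
  refine ⟨hkOf, ?_⟩
  rw [jOf, hkOf]; omega

lemma aval_top {n : ℕ} : aval n n = n * (n-1) / 2 := by
  unfold aval
  congr 1
  have : 2 * n - n = n := by omega
  rw [this, Nat.mul_comm]

lemma decompose {n : ℕ} (hn : 2 ≤ n) (i : ℕ) (hi1 : 1 ≤ i) (hi2 : i ≤ n*(n-1)/2) :
    ∃ k j, 1 ≤ k ∧ k ≤ n - 1 ∧ 1 ≤ j ∧ j ≤ n - k ∧ i = aval n k + j := by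
  classical
  set P : ℕ → Prop := fun k => aval n k < i with hP
  have hP1 : P 1 := by simp [hP, aval]; omega
  set K := Nat.findGreatest P n with hK
  have hK1 : 1 ≤ K := Nat.le_findGreatest (by omega) hP1
  have hKn : K ≤ n := Nat.findGreatest_le n
  have hKspec : P K := Nat.findGreatest_spec (m := 1) (by omega : 1 ≤ n) hP1
  have hKn1 : K ≤ n - 1 := by
    by_contra h
    have hKeq : K = n := by omega
    have h2 : aval n n < i := by have h3 : aval n K < i := hKspec; rw [hKeq] at h3; exact h3
    rw [aval_top] at h2
    omega
  have hmax : i ≤ aval n (K+1) := by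
    by_contra h
    exact Nat.findGreatest_is_greatest (by omega : K < K + 1) (by omega : K + 1 ≤ n)
      (by simpa [hP] using (by omega : aval n (K+1) < i))
  rw [aval_succ hK1 hKn] at hmax
  have hlt : aval n K < i := hKspec
  exact ⟨K, i - aval n K, hK1, hKn1, by omega, by omega, by omega⟩

end SpinorDn
end Part3
section Part4
namespace SpinorDn

/-- `σ_k`: sign of the second coordinate of `γ_{a_k + j}`. -/
def sig (n k : ℕ) : ℝ := if k = 1 ∧ n % 2 = 1 then -1 else 1

/-- `δ_k`: sign of `W_{a_k}(e_{n-1})`. -/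
def del (n k : ℕ) : ℝ := if k = 1 ∨ (n - k) % 2 = 1 then 1 else -1

/-- `τ_k`: sign of `W_{a_k+j}(e_{n-1})` for `j ≥ 1`. -/
def tau (n k : ℕ) : ℝ := if (n - k) % 2 = 0 then 1 else -1

lemma sig_sq (n k : ℕ) : sig n k * sig n k = 1 := by unfold sig; split <;> norm_num

lemma sig_ne_one (n k : ℕ) (h : k ≠ 1) : sig n k = 1 := by simp [sig, h]

lemma del_eq_sig_odd {n k : ℕ} (hk : 1 ≤ k) (hkn : k ≤ n) (h : (n - k) % 2 = 1) :
    del n k = sig n k := by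
  unfold del sig
  rw [if_pos (Or.inr h), if_neg]
  rintro ⟨rfl, hpar⟩
  omega

lemma del_eq_neg_sig_even {n k : ℕ} (hk : 1 ≤ k) (hkn : k ≤ n - 1) (hn : 2 ≤ n)
    (h : (n - k) % 2 = 0) : del n k = -(sig n k) := by
  unfold del sig
  by_cases hk1 : k = 1
  · have hodd : n % 2 = 1 := by omega
    rw [if_pos (Or.inl hk1), if_pos ⟨hk1, hodd⟩]; norm_num
  · rw [if_neg (by rintro (h' | h') <;> omega), if_neg (by rintro ⟨h', _⟩; exact hk1 h')]

lemma tau_eq_del_succ {n k : ℕ} (hk : 1 ≤ k) (hkn : k ≤ n - 2) :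
    tau n k = del n (k+1) := by
  unfold tau del
  by_cases h : (n - k) % 2 = 0
  · rw [if_pos h, if_pos (Or.inr (by omega))]
  · rw [if_neg h, if_neg (by rintro (h1 | h2) <;> omega)]

/-- The state of the word `W_{a_k + j}` on the relevant basis vectors. -/
def WS (n k j : ℕ) : Prop :=
  (∀ c, k - 1 ≤ c → c + j + 2 ≤ n → word n (aval n k + j) (stdE c) = stdE (c - (k-1))) ∧
  (1 ≤ j → word n (aval n k + j) (stdE (n-1-j)) = (-(sig n k)) • (stdE (n-k) : Fin n → ℝ)) ∧
  (∀ c, n - j ≤ c → c + 2 ≤ n → word n (aval n k + j) (stdE c) = stdE (c - k)) ∧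
  (word n (aval n k + j) (stdE (n-1)) =
    (if j = 0 then del n k else tau n k) • (stdE (if j = 0 then n - k else n-1-k) : Fin n → ℝ))

lemma WS_base {n : ℕ} (hn : 2 ≤ n) : WS n 1 0 := by
  have ha : aval n 1 = 0 := by simp [aval]
  refine ⟨?_, ?_, ?_, ?_⟩
  · intro c _ _
    rw [ha]
    simp [word]
  · omega
  · intro c h1 h2; omega
  · rw [ha]
    simp [word, del]

lemma WS_shift {n k : ℕ} (hn : 2 ≤ n) (hk : 1 ≤ k) (hk2 : k + 1 ≤ n - 1) (H : WS n k (n - k)) :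
    WS n (k+1) 0 := by
  obtain ⟨H1, H2, H3, H4⟩ := H
  have ha : aval n (k+1) + 0 = aval n k + (n - k) := by
    rw [aval_succ hk (by omega)]; omega
  refine ⟨?_, ?_, ?_, ?_⟩
  · intro c hc1 hc2
    rw [ha]
    simp only [Nat.add_sub_cancel]
    exact H3 c (by omega) (by omega)
  · intro h'; omega
  · intro c h1 h2; omega
  · rw [ha, H4, if_neg (by omega), if_neg (by omega), if_pos rfl, if_pos rfl,
      tau_eq_del_succ hk (by omega), show n - 1 - k = n - (k+1) from by omega]

end SpinorDn
end Part4
section Part5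
namespace SpinorDn

lemma WS_step {n k j : ℕ} (hn : 2 ≤ n) (hk : 1 ≤ k) (hk2 : k ≤ n - 1)
    (hj2 : j + 1 ≤ n - k) (H : WS n k j) : WS n k (j+1) := by
  obtain ⟨H1, H2, H3, H4⟩ := H
  obtain ⟨hkk, hjj⟩ := kOf_jOf_eq hk hk2 (show 1 ≤ j + 1 by omega) hj2
  have hword : ∀ v, word n (aval n k + (j+1)) v
      = word n (aval n k + j) (sRefl (beta n (aval n k + (j+1))) v) := by
    intro v
    rw [show aval n k + (j+1) = (aval n k + j) + 1 from by omega]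
    rfl
  by_cases hj0 : j = 0
  · subst hj0
    have hβ : betaIdx n (aval n k + (0+1)) = if (n - k) % 2 = 1 then n else n - 1 := by
      rw [betaIdx, hjj, hkk, if_neg (by omega)]
    by_cases hpar : (n - k) % 2 = 1
    · have hbeta : beta n (aval n k + (0+1)) = simpleRoot n n := by
        rw [beta, hβ, if_pos hpar]
      refine ⟨?_, ?_, ?_, ?_⟩
      · intro c hc1 hc2
        rw [hword, hbeta, sRefl_D_fix c hn (by omega) (by omega)]
        exact H1 c hc1 (by omega)
      · intro _
        rw [hword, hbeta, show n - 1 - (0+1) = n - 2 from by omega, sRefl_D_a hn,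
          word_neg, H4]
        rw [if_pos rfl, if_pos rfl, del_eq_sig_odd hk (by omega) hpar, ← neg_smul]
      · intro c h1 h2
        omega
      · rw [hword, hbeta, sRefl_D_b hn, word_neg, H1 (n-2) (by omega) (by omega)]
        rw [if_neg (by omega), if_neg (by omega),
          show n - 2 - (k-1) = n - 1 - k from by omega]
        simp [tau, hpar]
    · have hpar' : (n - k) % 2 = 0 := by omega
      have hbeta : beta n (aval n k + (0+1)) = simpleRoot n (n-1) := by
        rw [beta, hβ, if_neg hpar]
      have hm1 : 1 ≤ n - 1 := by omega
      have hm2 : n - 1 < n := by omega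
      refine ⟨?_, ?_, ?_, ?_⟩
      · intro c hc1 hc2
        rw [hword, hbeta, sRefl_A_fix (n-1) c hm1 hm2 (by omega) (by omega)]
        exact H1 c hc1 (by omega)
      · intro _
        rw [hword, hbeta, show n - 1 - (0+1) = n - 1 - 1 from by omega,
          sRefl_A_up (n-1) hm1 hm2, H4]
        rw [if_pos rfl, if_pos rfl, del_eq_neg_sig_even hk hk2 hn hpar']
      · intro c h1 h2
        omega
      · rw [hword, hbeta, show (n - 1 : ℕ) = (n-1) from rfl]
        have : sRefl (simpleRoot n (n-1)) (stdE (n-1)) = (stdE (n-1-1) : Fin n → ℝ) :=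
          sRefl_A_down (n-1) hm1 hm2
        rw [this, show n - 1 - 1 = n - 2 from by omega, H1 (n-2) (by omega) (by omega)]
        rw [if_neg (by omega), if_neg (by omega),
          show n - 2 - (k-1) = n - 1 - k from by omega]
        simp [tau, hpar']
  · -- j ≥ 1, next simple root is α_{n-(j+1)}
    have hbeta : beta n (aval n k + (j+1)) = simpleRoot n (n - (j+1)) := by
      rw [beta, betaIdx, hjj, hkk, if_pos (by omega)]
    have hm1 : 1 ≤ n - (j+1) := by omega
    have hm2 : n - (j+1) < n := by omega
    refine ⟨?_, ?_, ?_, ?_⟩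
    · intro c hc1 hc2
      rw [hword, hbeta, sRefl_A_fix (n-(j+1)) c hm1 hm2 (by omega) (by omega)]
      exact H1 c hc1 (by omega)
    · intro _
      rw [hword, hbeta, show n - 1 - (j+1) = n - (j+1) - 1 from by omega,
        sRefl_A_up (n-(j+1)) hm1 hm2, show n - (j+1) = n - 1 - j from by omega]
      exact H2 (by omega)
    · intro c h1 h2
      by_cases hc : c = n - (j+1)
      · subst hc
        rw [hword, hbeta, sRefl_A_down (n-(j+1)) hm1 hm2,
          show n - (j+1) - 1 = n - j - 2 from by omega, H1 (n-j-2) (by omega) (by omega),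
          show n - j - 2 - (k-1) = n - (j+1) - k from by omega]
      · rw [hword, hbeta, sRefl_A_fix (n-(j+1)) c hm1 hm2 (by omega) (by omega)]
        exact H3 c (by omega) h2
    · rw [hword, hbeta, sRefl_A_fix (n-(j+1)) (n-1) hm1 hm2 (by omega) (by omega), H4]
      rw [if_neg hj0, if_neg hj0, if_neg (by omega), if_neg (by omega)]

lemma WS_all {n : ℕ} (hn : 2 ≤ n) :
    ∀ k, 1 ≤ k → k ≤ n - 1 → ∀ j, j ≤ n - k → WS n k j := by
  intro k
  induction k with
  | zero => omega
  | succ k ihk =>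
    intro hk1 hk2
    have hrow0 : WS n (k+1) 0 := by
      rcases Nat.eq_zero_or_pos k with rfl | hkpos
      · exact WS_base hn
      · exact WS_shift hn hkpos hk2 (ihk hkpos (by omega) (n-k) (le_refl _))
    intro j
    induction j with
    | zero => intro _; exact hrow0
    | succ j ihj =>
      intro hj
      exact WS_step hn hk1 hk2 hj (ihj (by omega))

end SpinorDn
end Part5
section Part6
namespace SpinorDn

lemma gamma_eq {n k j : ℕ} (hn : 2 ≤ n) (hk : 1 ≤ k) (hk2 : k ≤ n - 1)
    (hj : 1 ≤ j) (hj2 : j ≤ n - k) :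
    gammaRoot n (aval n k + j) = stdE (n-k-j) + sig n k • (stdE (n-k) : Fin n → ℝ) := by
  obtain ⟨hkk, hjj⟩ := kOf_jOf_eq hk hk2 hj hj2
  obtain ⟨H1, H2, H3, H4⟩ := WS_all hn k hk hk2 (j-1) (by omega)
  rw [gammaRoot, show aval n k + j - 1 = aval n k + (j-1) from by omega]
  by_cases hj1 : j = 1
  · subst hj1
    have hβ : betaIdx n (aval n k + 1) = if (n - k) % 2 = 1 then n else n - 1 := by
      rw [betaIdx, hjj, hkk, if_neg (by omega)]
    by_cases hpar : (n - k) % 2 = 1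
    · rw [beta, hβ, if_pos hpar, simpleRoot_D, word_add, H1 (n-2) (by omega) (by omega),
        H4, if_pos rfl, if_pos rfl, del_eq_sig_odd hk (by omega) hpar,
        show n - 2 - (k-1) = n - k - 1 from by omega]
    · rw [beta, hβ, if_neg hpar, simpleRoot_A (n-1) (by omega), word_sub,
        show n - 1 - 1 = n - 2 from by omega, H1 (n-2) (by omega) (by omega),
        H4, if_pos rfl, if_pos rfl, del_eq_neg_sig_even hk hk2 hn (by omega),
        neg_smul, sub_neg_eq_add, show n - 2 - (k-1) = n - k - 1 from by omega]
  · rw [beta, betaIdx, hjj, hkk, if_pos (show 2 ≤ j from by omega),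
      simpleRoot_A (n-j) (by omega), word_sub, H1 (n-j-1) (by omega) (by omega),
      show n - j - 1 - (k-1) = n - k - j from by omega,
      show n - j = n - 1 - (j-1) from by omega, H2 (by omega), neg_smul, sub_neg_eq_add]

lemma dot_pair {n : ℕ} (a1 b1 a2 b2 : ℕ) (s1 s2 : ℝ)
    (h1 : a1 < n) (h2 : b1 < n) (h3 : a2 < n) (h4 : b2 < n) :
    dot (stdE a1 + s1 • stdE b1) (stdE a2 + s2 • stdE b2 : Fin n → ℝ) =
      (if a1 = a2 then (1:ℝ) else 0) + s2 * (if a1 = b2 then 1 else 0)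
        + s1 * (if b1 = a2 then 1 else 0) + s1 * s2 * (if b1 = b2 then 1 else 0) := by
  simp only [dot_add_left, dot_add_right, dot_smul_left, dot_smul_right]
  rw [dot_stdE a1 a2 h3, dot_stdE a1 b2 h4, dot_stdE b1 a2 h3, dot_stdE b1 b2 h4]
  ring

end SpinorDn
end Part6


open SpinorDn in
/-- For the fixed reduced word `(β_1,…,β_N)` for the spinor variety of `SO(2n)` and the
associated positive roots `γ_i = s_{β_1}⋯s_{β_{i-1}}(β_i)`, one has
`⟨γ_k^∨, γ_i⟩ ∈ {0,1}` for all `k < i`. -/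
theorem stmt_3 (n : ℕ) (hn : 2 ≤ n) (k i : ℕ) (hk : 1 ≤ k) (hki : k < i)
    (hi : i ≤ n*(n-1)/2) :
    cpair (gammaRoot n k) (gammaRoot n i) ∈ ({0, 1} : Set ℝ) := by
  have hN : aval n n = n*(n-1)/2 := aval_top
  obtain ⟨k1, j1, hk11, hk12, hj11, hj12, hK⟩ := decompose hn k hk (by omega)
  obtain ⟨k2, j2, hk21, hk22, hj21, hj22, hI⟩ := decompose hn i (by omega) hi
  rw [hK, hI, gamma_eq hn hk11 hk12 hj11 hj12, gamma_eq hn hk21 hk22 hj21 hj22]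
  have hlt : k1 < k2 ∨ (k1 = k2 ∧ j1 < j2) := by
    rcases lt_trichotomy k1 k2 with h | h | h
    · exact Or.inl h
    · refine Or.inr ⟨h, ?_⟩
      subst h
      omega
    · exfalso
      have h1 : aval n k2 + j2 ≤ aval n (k2+1) := by
        rw [aval_succ hk21 (by omega)]; omega
      have h2 : aval n (k2+1) ≤ aval n k1 := aval_mono (by omega) (by omega)
      omega
  have hself : dot (stdE (n-k1-j1) + sig n k1 • stdE (n-k1) : Fin n → ℝ)
      (stdE (n-k1-j1) + sig n k1 • stdE (n-k1)) = 2 := by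
    rw [dot_pair _ _ _ _ _ _ (by omega) (by omega) (by omega) (by omega),
      if_pos rfl, if_pos rfl, if_neg (by omega), if_neg (by omega)]
    have hs := sig_sq n k1
    linear_combination hs
  rw [cpair, hself,
    dot_pair (n-k1-j1) (n-k1) (n-k2-j2) (n-k2) (sig n k1) (sig n k2)
      (by omega) (by omega) (by omega) (by omega)]
  simp only [Set.mem_insert_iff, Set.mem_singleton_iff]
  rcases hlt with h | ⟨heq, hjlt⟩
  · have hs2 : sig n k2 = 1 := sig_ne_one n k2 (by omega)
    rw [if_neg (by omega : ¬ (n - k1 : ℕ) = n - k2 - j2),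
      if_neg (by omega : ¬ (n - k1 : ℕ) = n - k2), hs2]
    by_cases haa : (n - k1 - j1 : ℕ) = n - k2 - j2
    · rw [if_pos haa, if_neg (by omega : ¬ (n - k1 - j1 : ℕ) = n - k2)]
      right; ring
    · rw [if_neg haa]
      by_cases hab : (n - k1 - j1 : ℕ) = n - k2
      · rw [if_pos hab]; right; ring
      · rw [if_neg hab]; left; ring
  · subst heq
    rw [if_neg (by omega : ¬ (n - k1 - j1 : ℕ) = n - k1 - j2),
      if_neg (by omega : ¬ (n - k1 - j1 : ℕ) = n - k1),
      if_neg (by omega : ¬ (n - k1 : ℕ) = n - k1 - j2), if_pos rfl]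
    right
    have hs := sig_sq n k1
    linear_combination hs

end
end

section
/- With notation as above, if i = a_k + j for some k ∈ [2, n-1] and j ∈ [1, n-k], then ⟨γ_{k-1}^∨, γ_i⟩ = 1. -/
set_option maxHeartbeats 1000000


noncomputable section

namespace SpinorAux
open SpinorDn

variable {n : ℕ}

/-! ### Dot product basics -/

lemma dot_stdE_right (v : Fin n → ℝ) (b : ℕ) (hb : b < n) :
    dot v (stdE b) = v ⟨b, hb⟩ := by
  unfold dot stdE
  rw [Finset.sum_eq_single (⟨b, hb⟩ : Fin n)]
  · simp
  · intro u _ hu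
    have h : (u : ℕ) ≠ b := fun h => hu (Fin.ext h)
    simp [h]
  · intro h; exact absurd (Finset.mem_univ _) h

lemma dot_comm (v w : Fin n → ℝ) : dot v w = dot w v := by
  unfold dot; congr 1; ext u; ring

lemma dot_sub_right (v w x : Fin n → ℝ) : dot v (w - x) = dot v w - dot v x := by
  unfold dot
  rw [← Finset.sum_sub_distrib]
  congr 1; ext u; simp [mul_sub]

lemma dot_add_right (v w x : Fin n → ℝ) : dot v (w + x) = dot v w + dot v x := by
  unfold dot
  rw [← Finset.sum_add_distrib]
  congr 1; ext u; simp [mul_add]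

lemma dot_smul_right (v w : Fin n → ℝ) (c : ℝ) : dot v (c • w) = c * dot v w := by
  unfold dot
  rw [Finset.mul_sum]
  congr 1; ext u; simp; ring

lemma dot_sub_left (v w x : Fin n → ℝ) : dot (v - w) x = dot v x - dot w x := by
  rw [dot_comm, dot_sub_right, dot_comm x v, dot_comm x w]

lemma dot_add_left (v w x : Fin n → ℝ) : dot (v + w) x = dot v x + dot w x := by
  rw [dot_comm, dot_add_right, dot_comm x v, dot_comm x w]

lemma dot_smul_left (v w : Fin n → ℝ) (c : ℝ) : dot (c • v) w = c * dot v w := by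
  rw [dot_comm, dot_smul_right, dot_comm]

lemma dot_stdE_stdE (a b : ℕ) (hb : b < n) :
    dot (stdE a) (stdE b : Fin n → ℝ) = if a = b then 1 else 0 := by
  rw [dot_stdE_right _ b hb]
  unfold stdE
  simp [eq_comm]

/-! ### Reflections on basis vectors -/

lemma sRefl_swap (p q a : ℕ) (hp : p < n) (hq : q < n) (hpq : p ≠ q) (ha : a < n) :
    sRefl (stdE p - stdE q) (stdE a : Fin n → ℝ) =
      if a = p then stdE q else if a = q then stdE p else stdE a := by
  have hββ : dot (stdE p - stdE q) (stdE p - stdE q : Fin n → ℝ) = 2 := by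
    rw [dot_sub_right, dot_sub_left, dot_sub_left,
      dot_stdE_stdE p p hp, dot_stdE_stdE q p hp,
      dot_stdE_stdE p q hq, dot_stdE_stdE q q hq]
    simp [hpq, hpq.symm]
    norm_num
  have hv : dot (stdE a) (stdE p - stdE q : Fin n → ℝ)
      = (if a = p then 1 else 0) - (if a = q then 1 else 0) := by
    rw [dot_sub_right, dot_stdE_stdE a p hp, dot_stdE_stdE a q hq]
  unfold sRefl
  rw [hββ, hv]
  by_cases h1 : a = p
  · subst h1
    rw [if_pos rfl, if_pos rfl, if_neg hpq]
    norm_num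
  · by_cases h2 : a = q
    · subst h2
      rw [if_neg h1, if_neg h1, if_pos rfl, if_pos rfl]
      norm_num
    · rw [if_neg h1, if_neg h1, if_neg h2, if_neg h2]
      norm_num

lemma sRefl_nswap (p q a : ℕ) (hp : p < n) (hq : q < n) (hpq : p ≠ q) (ha : a < n) :
    sRefl (stdE p + stdE q) (stdE a : Fin n → ℝ) =
      if a = p then -stdE q else if a = q then -stdE p else stdE a := by
  have hββ : dot (stdE p + stdE q) (stdE p + stdE q : Fin n → ℝ) = 2 := by
    rw [dot_add_right, dot_add_left, dot_add_left,
      dot_stdE_stdE p p hp, dot_stdE_stdE q p hp,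
      dot_stdE_stdE p q hq, dot_stdE_stdE q q hq]
    simp [hpq, hpq.symm]
    norm_num
  have hv : dot (stdE a) (stdE p + stdE q : Fin n → ℝ)
      = (if a = p then 1 else 0) + (if a = q then 1 else 0) := by
    rw [dot_add_right, dot_stdE_stdE a p hp, dot_stdE_stdE a q hq]
  unfold sRefl
  rw [hββ, hv]
  by_cases h1 : a = p
  · subst h1
    rw [if_pos rfl, if_pos rfl, if_neg hpq]
    norm_num
  · by_cases h2 : a = q
    · subst h2
      rw [if_neg h1, if_neg h1, if_pos rfl, if_pos rfl]
      norm_num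
    · rw [if_neg h1, if_neg h1, if_neg h2, if_neg h2]
      norm_num

lemma sRefl_smul (β v : Fin n → ℝ) (c : ℝ) : sRefl β (c • v) = c • sRefl β v := by
  unfold sRefl
  rw [dot_smul_left]
  rw [smul_sub, smul_smul]
  congr 2
  ring

lemma sRefl_add (β v w : Fin n → ℝ) : sRefl β (v + w) = sRefl β v + sRefl β w := by
  unfold sRefl
  rw [dot_add_left]
  have h : (2 * (dot v β + dot w β) / dot β β)
      = 2 * dot v β / dot β β + 2 * dot w β / dot β β := by ring
  rw [h, add_smul]
  abel

lemma sRefl_sub (β v w : Fin n → ℝ) : sRefl β (v - w) = sRefl β v - sRefl β w := by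
  unfold sRefl
  rw [dot_sub_left]
  have h : (2 * (dot v β - dot w β) / dot β β)
      = 2 * dot v β / dot β β - 2 * dot w β / dot β β := by ring
  rw [h, sub_smul]
  abel

lemma sRefl_neg (β v : Fin n → ℝ) : sRefl β (-v) = - sRefl β v := by
  have h := sRefl_smul β v (-1)
  simpa using h

/-! ### word basics -/

lemma word_zero (v : Fin n → ℝ) : word n 0 v = v := rfl

lemma word_succ (m : ℕ) (v : Fin n → ℝ) :
    word n (m+1) v = word n m (sRefl (beta n (m+1)) v) := rfl

lemma word_neg (m : ℕ) (v : Fin n → ℝ) : word n m (-v) = - word n m v := by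
  induction m generalizing v with
  | zero => rfl
  | succ m ih => rw [word_succ, sRefl_neg, ih, word_succ]

lemma word_sub (m : ℕ) (v w : Fin n → ℝ) : word n m (v - w) = word n m v - word n m w := by
  induction m generalizing v w with
  | zero => rfl
  | succ m ih => rw [word_succ, sRefl_sub, ih, word_succ, word_succ]

lemma word_add (m : ℕ) (v w : Fin n → ℝ) : word n m (v + w) = word n m v + word n m w := by
  induction m generalizing v w with
  | zero => rfl
  | succ m ih => rw [word_succ, sRefl_add, ih, word_succ, word_succ]

lemma word_smul (m : ℕ) (v : Fin n → ℝ) (c : ℝ) : word n m (c • v) = c • word n m v := by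
  induction m generalizing v with
  | zero => rfl
  | succ m ih => rw [word_succ, sRefl_smul, ih, word_succ]

/-! ### Arithmetic of `aval`, `kOf`, `jOf` -/

lemma aval_one : aval n 1 = 0 := by simp [aval]

lemma two_mul_aval (k : ℕ) : 2 * aval n k = (k-1)*(2*n-k) := by
  unfold aval
  apply Nat.mul_div_cancel'
  rcases Nat.even_or_odd k with he | ho
  · refine Dvd.dvd.mul_left ?_ _
    obtain ⟨m, hm⟩ := he
    have h : k ≤ 2*n ∨ 2*n < k := le_or_gt _ _
    omega
  · refine Dvd.dvd.mul_right ?_ _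
    obtain ⟨m, hm⟩ := ho
    omega

lemma aval_succ (k : ℕ) (hk1 : 1 ≤ k) (hk : k ≤ n) : aval n (k+1) = aval n k + (n - k) := by
  have h1 := two_mul_aval (n := n) k
  have h2 := two_mul_aval (n := n) (k+1)
  have key : (k+1-1)*(2*n-(k+1)) = (k-1)*(2*n-k) + 2*(n-k) := by
    obtain ⟨d, rfl⟩ := Nat.le.dest hk
    obtain ⟨k', rfl⟩ := Nat.exists_eq_add_of_le hk1
    have e1 : 1 + k' + 1 - 1 = k' + 1 := by omega
    have e2 : 2*(1+k'+d) - (1+k'+1) = k' + 2*d := by omega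
    have e3 : 1 + k' - 1 = k' := by omega
    have e4 : 2*(1+k'+d) - (1+k') = k' + 2*d + 1 := by omega
    have e5 : 1 + k' + d - (1+k') = d := by omega
    rw [e1, e2, e3, e4, e5]
    ring
  rw [key, ← h1] at h2
  omega

lemma aval_mono (x y : ℕ) (hx1 : 1 ≤ x) (hxy : x ≤ y) (hy : y ≤ n) :
    aval n x ≤ aval n y := by
  induction y, hxy using Nat.le_induction with
  | base => exact le_refl _
  | succ m hm ih =>
    have h1 : m ≤ n := by omega
    have h2 := ih (by omega)
    rw [aval_succ m (by omega) h1]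
    omega

lemma kOf_eq (k j : ℕ) (hk1 : 1 ≤ k) (hk : k + 1 ≤ n) (hj1 : 1 ≤ j) (hj : j ≤ n - k) :
    kOf n (aval n k + j) = k := by
  unfold kOf
  have hfil : (Finset.Icc 1 n).filter (fun x => aval n x < aval n k + j) = Finset.Icc 1 k := by
    ext x
    simp only [Finset.mem_filter, Finset.mem_Icc]
    constructor
    · rintro ⟨⟨h1, h2⟩, h3⟩
      refine ⟨h1, ?_⟩
      by_contra hx
      push_neg at hx
      have h4 : aval n (k+1) ≤ aval n x := aval_mono (k+1) x (by omega) hx (by omega)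
      rw [aval_succ k (by omega) (by omega)] at h4
      omega
    · rintro ⟨h1, h2⟩
      refine ⟨⟨h1, by omega⟩, ?_⟩
      have h5 := aval_mono (n := n) x k h1 h2 (by omega)
      omega
  rw [hfil, Nat.card_Icc]
  omega

lemma jOf_eq (k j : ℕ) (hk1 : 1 ≤ k) (hk : k + 1 ≤ n) (hj1 : 1 ≤ j) (hj : j ≤ n - k) :
    jOf n (aval n k + j) = j := by
  unfold jOf
  rw [kOf_eq k j hk1 hk hj1 hj]
  omega

/-! ### The simple roots β_i in coordinates -/

lemma beta_ge2 (k j : ℕ) (hk1 : 1 ≤ k) (hk : k + 1 ≤ n) (hj1 : 2 ≤ j) (hj : j ≤ n - k) :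
    beta n (aval n k + j) = stdE (n-j-1) - stdE (n-j) := by
  unfold beta betaIdx
  rw [jOf_eq k j hk1 hk (by omega) hj, if_pos hj1]
  unfold simpleRoot
  rw [if_pos (show n - j < n by omega)]

lemma beta_one_odd (k : ℕ) (hk1 : 1 ≤ k) (hk : k + 1 ≤ n) (hpar : (n - k) % 2 = 1) :
    beta n (aval n k + 1) = stdE (n-2) + stdE (n-1) := by
  unfold beta betaIdx
  rw [jOf_eq k 1 hk1 hk le_rfl (by omega), kOf_eq k 1 hk1 hk le_rfl (by omega)]
  rw [if_neg (by omega), if_pos hpar]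
  unfold simpleRoot
  rw [if_neg (lt_irrefl n)]

lemma beta_one_even (k : ℕ) (hk1 : 1 ≤ k) (hk : k + 1 ≤ n) (hpar : (n - k) % 2 = 0) :
    beta n (aval n k + 1) = stdE (n-2) - stdE (n-1) := by
  unfold beta betaIdx
  rw [jOf_eq k 1 hk1 hk le_rfl (by omega), kOf_eq k 1 hk1 hk le_rfl (by omega)]
  rw [if_neg (by omega), if_neg (by omega)]
  unfold simpleRoot
  rw [if_pos (show n - 1 < n by omega), show n - 1 - 1 = n - 2 from by omega]

/-! ### The closed form of the word map on basis vectors -/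

/-- Closed form for `word n (aval n k + j) (stdE a)`, valid for
`1 ≤ k`, `k+1 ≤ n`, `1 ≤ j ≤ n-k`, `a < n`. -/
def Wf (n k j a : ℕ) : Fin n → ℝ :=
  if a + 2 ≤ k then (if a = 0 then ((-1:ℝ)^(n-1)) else -1) • stdE (n-1-a)
  else if a + j + 2 ≤ n then stdE (a+1-k)
  else if a + j + 1 = n then (if k = 1 then ((-1:ℝ)^(n-1)) else -1) • stdE (n-k)
  else if a + 2 ≤ n then stdE (a-k)
  else ((-1:ℝ)^(n-k)) • stdE (n-k-1)



lemma one_le_sub {k : ℕ} (hk : k + 1 ≤ n) : 1 ≤ n - k := by omega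

lemma neg_one_pow_sub_one_even (hn : 1 ≤ n) (h : (n-1) % 2 = 0) : ((-1:ℝ))^(n-1) = 1 :=
  Even.neg_one_pow (Nat.even_iff.mpr h)

lemma stdE_congr {x y : ℕ} (h : x = y) : (stdE x : Fin n → ℝ) = stdE y := by rw [h]

lemma base_one (hn : 2 ≤ n) (a : ℕ) (ha : a < n) :
    word n (aval n 1 + 1) (stdE a) = Wf n 1 1 a := by
  rw [word_succ, aval_one, word_zero]
  rcases Nat.even_or_odd (n - 1) with hpar | hpar
  · -- n odd : β₁ = α_{n-1}, a plain swap
    have hp : (n - 1) % 2 = 0 := Nat.even_iff.mp hpar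
    have hβ : beta n (aval n 1 + 1) = stdE (n-2) - stdE (n-1) :=
      beta_one_even 1 le_rfl (by omega) hp
    rw [aval_one] at hβ
    rw [hβ, sRefl_swap (n-2) (n-1) a (by omega) (by omega) (by omega) ha]
    have hsgn : ((-1:ℝ))^(n-1) = 1 := Even.neg_one_pow hpar
    unfold Wf
    split_ifs <;>
      first
        | rfl
        | omega
        | (exact stdE_congr (by omega))
        | (rw [hsgn, one_smul] <;> exact stdE_congr (by omega))
  · -- n even : β₁ = α_n
    have hp : (n - 1) % 2 = 1 := Nat.odd_iff.mp hpar
    have hβ : beta n (aval n 1 + 1) = stdE (n-2) + stdE (n-1) :=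
      beta_one_odd 1 le_rfl (by omega) hp
    rw [aval_one] at hβ
    rw [hβ, sRefl_nswap (n-2) (n-1) a (by omega) (by omega) (by omega) ha]
    have hsgn : ((-1:ℝ))^(n-1) = -1 := Odd.neg_one_pow hpar
    unfold Wf
    split_ifs <;>
      first
        | rfl
        | omega
        | (exact stdE_congr (by omega))
        | (rw [hsgn, neg_one_smul] <;>
            first
              | exact stdE_congr (by omega)
              | exact neg_inj.mpr (stdE_congr (by omega)))

lemma inner_step (k j : ℕ) (hn : 2 ≤ n) (hk1 : 1 ≤ k) (hk : k + 1 ≤ n)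
    (hj1 : 1 ≤ j) (hj : j + 1 ≤ n - k)
    (IH : ∀ a, a < n → word n (aval n k + j) (stdE a) = Wf n k j a)
    (a : ℕ) (ha : a < n) :
    word n (aval n k + (j+1)) (stdE a) = Wf n k (j+1) a := by
  have hstep : aval n k + (j+1) = (aval n k + j) + 1 := rfl
  rw [hstep, word_succ]
  have hβ : beta n (aval n k + j + 1) = stdE (n-(j+1)-1) - stdE (n-(j+1)) := by
    have h := beta_ge2 k (j+1) hk1 hk (by omega) (by omega)
    rw [hstep] at h
    exact h
  rw [hβ, sRefl_swap _ _ a (by omega) (by omega) (by omega) ha]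
  by_cases h1 : a = n-(j+1)-1
  · rw [if_pos h1, IH (n-(j+1)) (by omega)]
    subst h1
    clear IH hβ hstep
    unfold Wf
    split_ifs <;>
      first
        | rfl
        | omega
        | (exact stdE_congr (by omega))
  · rw [if_neg h1]
    by_cases h2 : a = n-(j+1)
    · rw [if_pos h2, IH (n-(j+1)-1) (by omega)]
      subst h2
      clear IH hβ hstep
      unfold Wf
      split_ifs <;>
        first
          | rfl
          | omega
          | (exact stdE_congr (by omega))
    · rw [if_neg h2, IH a ha]
      clear IH hβ hstep
      unfold Wf
      split_ifs <;>
        first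
          | rfl
          | omega
          | (exact stdE_congr (by omega))


lemma block_step (k : ℕ) (hn : 2 ≤ n) (hk1 : 1 ≤ k) (hk : k + 2 ≤ n)
    (IH : ∀ a, a < n → word n (aval n k + (n-k)) (stdE a) = Wf n k (n-k) a)
    (a : ℕ) (ha : a < n) :
    word n (aval n (k+1) + 1) (stdE a) = Wf n (k+1) 1 a := by
  have hM : aval n (k+1) + 1 = (aval n k + (n-k)) + 1 := by
    rw [aval_succ k hk1 (by omega)]
  have hβ1 := beta_one_odd (n := n) (k+1) (by omega) (by omega)
  have hβ2 := beta_one_even (n := n) (k+1) (by omega) (by omega)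
  rw [hM, word_succ, ← hM]
  rcases Nat.even_or_odd (n - (k+1)) with hpar | hpar
  · -- n-k-1 even, so β = α_{n-1}, plain swap; and n-k is odd
    have hp : (n - (k+1)) % 2 = 0 := Nat.even_iff.mp hpar
    have hsgn : ((-1:ℝ))^(n-k) = -1 := Odd.neg_one_pow (by
      refine Nat.odd_iff.mpr ?_
      omega)
    rw [hβ2 hp, sRefl_swap (n-2) (n-1) a (by omega) (by omega) (by omega) ha]
    by_cases h1 : a = n-2
    · rw [if_pos h1, IH (n-1) (by omega)]
      subst h1
      clear IH hβ1 hβ2 hM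
      unfold Wf
      split_ifs <;>
        first
          | rfl
          | omega
          | (exact stdE_congr (by omega))
          | (rw [hsgn, neg_one_smul, neg_one_smul] <;>
              exact neg_inj.mpr (stdE_congr (by omega)))
    · rw [if_neg h1]
      by_cases h2 : a = n-1
      · rw [if_pos h2, IH (n-2) (by omega)]
        subst h2
        clear IH hβ1 hβ2 hM
        unfold Wf
        have hsgn2 : ((-1:ℝ))^(n-(k+1)) = 1 := Even.neg_one_pow hpar
        split_ifs <;>
          first
            | rfl
            | omega
            | (exact stdE_congr (by omega))
            | (rw [hsgn2, one_smul] <;> exact stdE_congr (by omega))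
      · rw [if_neg h2, IH a ha]
        clear IH hβ1 hβ2 hM
        unfold Wf
        split_ifs <;>
          first
            | rfl
            | omega
            | (exact stdE_congr (by omega))
            | (refine congrArg₂ (· • ·) ?_ (stdE_congr (by omega)) <;>
                first | rfl | omega)
  · -- n-k-1 odd, so β = α_n, negated swap; and n-k is even
    have hp : (n - (k+1)) % 2 = 1 := Nat.odd_iff.mp hpar
    have hsgn : ((-1:ℝ))^(n-k) = 1 := Even.neg_one_pow (by
      refine Nat.even_iff.mpr ?_
      omega)
    rw [hβ1 hp, sRefl_nswap (n-2) (n-1) a (by omega) (by omega) (by omega) ha]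
    by_cases h1 : a = n-2
    · rw [if_pos h1, word_neg, IH (n-1) (by omega)]
      subst h1
      clear IH hβ1 hβ2 hM
      unfold Wf
      split_ifs <;>
        first
          | rfl
          | omega
          | (exact stdE_congr (by omega))
          | (rw [hsgn, one_smul, neg_one_smul] <;>
              exact neg_inj.mpr (stdE_congr (by omega)))
    · rw [if_neg h1]
      by_cases h2 : a = n-1
      · rw [if_pos h2, word_neg, IH (n-2) (by omega)]
        subst h2
        clear IH hβ1 hβ2 hM
        unfold Wf
        have hsgn2 : ((-1:ℝ))^(n-(k+1)) = -1 := Odd.neg_one_pow hpar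
        split_ifs <;>
          first
            | rfl
            | omega
            | (exact stdE_congr (by omega))
            | (rw [hsgn2, neg_one_smul] <;>
                first
                  | exact stdE_congr (by omega)
                  | exact neg_inj.mpr (stdE_congr (by omega))
                  | exact (neg_inj.mpr (stdE_congr (by omega))).symm
                  | (exact neg_eq_iff_eq_neg.mpr ?_))
      · rw [if_neg h2, IH a ha]
        clear IH hβ1 hβ2 hM
        unfold Wf
        split_ifs <;>
          first
            | rfl
            | omega
            | (exact stdE_congr (by omega))
            | (refine congrArg₂ (· • ·) ?_ (stdE_congr (by omega)) <;>
                first | rfl | omega)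


/-- The master formula: closed form for the word map on basis vectors. -/
lemma word_formula (hn : 2 ≤ n) :
    ∀ k, 1 ≤ k → k + 1 ≤ n → ∀ j, 1 ≤ j → j ≤ n - k → ∀ a, a < n →
      word n (aval n k + j) (stdE a) = Wf n k j a := by
  intro k hk1
  induction k, hk1 using Nat.le_induction with
  | base =>
    intro hkn j hj1
    induction j, hj1 using Nat.le_induction with
    | base => intro _ a ha; exact base_one hn a ha
    | succ j hj1' ih =>
      intro hj a ha
      exact inner_step 1 j hn le_rfl hkn hj1' hj (fun b hb => ih (by omega) b hb) a ha
  | succ k hk1' ihk =>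
    intro hkn j hj1
    have hblk : ∀ a, a < n → word n (aval n (k+1) + 1) (stdE a) = Wf n (k+1) 1 a := by
      intro a ha
      exact block_step k hn hk1' (by omega)
        (fun b hb => ihk (by omega) (n-k) (by omega) (by omega) b hb) a ha
    induction j, hj1 using Nat.le_induction with
    | base => intro _ a ha; exact hblk a ha
    | succ j hj1' ih =>
      intro hj a ha
      exact inner_step (k+1) j hn (by omega) hkn hj1' hj (fun b hb => ih (by omega) b hb) a ha

/-- `γ_{k-1} = e_{n-k} + (-1)^n e_{n-1}` for `2 ≤ k ≤ n-1`. -/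
lemma gamma_km1 (hn : 2 ≤ n) (k : ℕ) (hk2 : 2 ≤ k) (hk : k ≤ n - 1) :
    gammaRoot n (k-1) = stdE (n-k) + ((-1:ℝ)^n) • stdE (n-1) := by
  have hpow : ((-1:ℝ))^n = -((-1:ℝ))^(n-1) := by
    conv_lhs => rw [show n = (n-1)+1 from by omega]
    rw [pow_succ]
    ring
  rcases eq_or_lt_of_le hk2 with hEq | hgt
  · -- k = 2
    have hk1 : k - 1 = 1 := by omega
    unfold gammaRoot
    rw [hk1]
    rw [show (1:ℕ) - 1 = 0 from rfl, word_zero]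
    rcases Nat.even_or_odd (n - 1) with hpar | hpar
    · -- n odd
      have hb : beta n 1 = stdE (n-2) - stdE (n-1) := by
        have h := beta_one_even (n := n) 1 le_rfl (by omega) (Nat.even_iff.mp hpar)
        rw [aval_one] at h
        exact h
      rw [hb, hpow, show ((-1:ℝ))^(n-1) = 1 from Even.neg_one_pow hpar]
      rw [show n - k = n - 2 from by omega]
      norm_num
      rfl
    · -- n even
      have hb : beta n 1 = stdE (n-2) + stdE (n-1) := by
        have h := beta_one_odd (n := n) 1 le_rfl (by omega) (Nat.odd_iff.mp hpar)
        rw [aval_one] at h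
        exact h
      rw [hb, hpow, show ((-1:ℝ))^(n-1) = -1 from Odd.neg_one_pow hpar]
      rw [show n - k = n - 2 from by omega]
      norm_num
  · -- k ≥ 3
    have hb : beta n (k-1) = stdE (n-k) - stdE (n-k+1) := by
      have h := beta_ge2 (n := n) 1 (k-1) le_rfl (by omega) (by omega) (by omega)
      rw [aval_one, Nat.zero_add] at h
      rw [h, show n-(k-1)-1 = n-k from by omega, show n-(k-1) = n-k+1 from by omega]
    unfold gammaRoot
    rw [hb, show k-1-1 = k-2 from by omega, word_sub]
    rw [show (k-2 : ℕ) = aval n 1 + (k-2) from by rw [aval_one, Nat.zero_add]]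
    rw [word_formula hn 1 le_rfl (by omega) (k-2) (by omega) (by omega) (n-k) (by omega)]
    rw [word_formula hn 1 le_rfl (by omega) (k-2) (by omega) (by omega) (n-k+1) (by omega)]
    unfold Wf
    rw [if_neg (by omega), if_pos (by omega), if_neg (by omega), if_neg (by omega),
      if_pos (by omega), if_pos rfl]
    rw [stdE_congr (show n-k+1-1 = n-k from by omega), hpow, neg_smul, ← sub_eq_add_neg]

/-- `γ_{a_k+j} = e_{n-k-j} + e_{n-k}` for `2 ≤ k ≤ n-1`, `1 ≤ j ≤ n-k`. -/
lemma gamma_i (hn : 2 ≤ n) (k j : ℕ) (hk2 : 2 ≤ k) (hk : k ≤ n - 1)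
    (hj1 : 1 ≤ j) (hj : j ≤ n - k) :
    gammaRoot n (aval n k + j) = stdE (n-k-j) + stdE (n-k) := by
  rcases eq_or_lt_of_le hj1 with hEq | hgt
  · -- j = 1
    obtain rfl : j = 1 := hEq.symm
    unfold gammaRoot
    rw [Nat.add_sub_cancel]
    have hsplit : aval n k = aval n (k-1) + (n-(k-1)) := by
      have h := aval_succ (n := n) (k-1) (by omega) (by omega)
      rw [show k-1+1 = k from by omega] at h
      exact h
    rcases Nat.even_or_odd (n - k) with hpar | hpar
    · -- n-k even : β = α_{n-1}
      have hp2 : (n - k) % 2 = 0 := Nat.even_iff.mp hpar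
      have hb : beta n (aval n k + 1) = stdE (n-2) - stdE (n-1) :=
        beta_one_even (n := n) k (by omega) (by omega) hp2
      rw [hb, word_sub, hsplit]
      rw [word_formula hn (k-1) (by omega) (by omega) (n-(k-1)) (by omega) (by omega)
        (n-2) (by omega)]
      rw [word_formula hn (k-1) (by omega) (by omega) (n-(k-1)) (by omega) (by omega)
        (n-1) (by omega)]
      unfold Wf
      rw [if_neg (by omega), if_neg (by omega), if_neg (by omega), if_pos (by omega),
        if_neg (by omega), if_neg (by omega), if_neg (by omega), if_neg (by omega)]
      have hsgn : ((-1:ℝ))^(n-(k-1)) = -1 := Odd.neg_one_pow (Nat.odd_iff.mpr (by omega))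
      rw [hsgn, neg_one_smul, sub_neg_eq_add]
      rw [stdE_congr (show n-2-(k-1) = n-k-1 from by omega),
        stdE_congr (show n-(k-1)-1 = n-k from by omega)]
    · -- n-k odd : β = α_n
      have hp2 : (n - k) % 2 = 1 := Nat.odd_iff.mp hpar
      have hb : beta n (aval n k + 1) = stdE (n-2) + stdE (n-1) :=
        beta_one_odd (n := n) k (by omega) (by omega) hp2
      rw [hb, word_add, hsplit]
      rw [word_formula hn (k-1) (by omega) (by omega) (n-(k-1)) (by omega) (by omega)
        (n-2) (by omega)]
      rw [word_formula hn (k-1) (by omega) (by omega) (n-(k-1)) (by omega) (by omega)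
        (n-1) (by omega)]
      unfold Wf
      rw [if_neg (by omega), if_neg (by omega), if_neg (by omega), if_pos (by omega),
        if_neg (by omega), if_neg (by omega), if_neg (by omega), if_neg (by omega)]
      have hsgn : ((-1:ℝ))^(n-(k-1)) = 1 := Even.neg_one_pow (Nat.even_iff.mpr (by omega))
      rw [hsgn, one_smul]
      rw [stdE_congr (show n-2-(k-1) = n-k-1 from by omega),
        stdE_congr (show n-(k-1)-1 = n-k from by omega)]
  · -- j ≥ 2
    unfold gammaRoot
    rw [show aval n k + j - 1 = aval n k + (j-1) from by omega]
    have hb : beta n (aval n k + j) = stdE (n-j-1) - stdE (n-j) :=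
      beta_ge2 (n := n) k j (by omega) (by omega) (by omega) hj
    rw [hb, word_sub]
    rw [word_formula hn k (by omega) (by omega) (j-1) (by omega) (by omega)
      (n-j-1) (by omega)]
    rw [word_formula hn k (by omega) (by omega) (j-1) (by omega) (by omega)
      (n-j) (by omega)]
    unfold Wf
    rw [if_neg (by omega), if_pos (by omega), if_neg (by omega), if_neg (by omega),
      if_pos (by omega), if_neg (by omega)]
    rw [neg_one_smul, sub_neg_eq_add]
    rw [stdE_congr (show n-j-1+1-k = n-k-j from by omega)]

end SpinorAux

open SpinorDn in
/-- If `i = a_k + j` with `k ∈ [2, n-1]` and `j ∈ [1, n-k]`, then `⟨γ_{k-1}^∨, γ_i⟩ = 1`. -/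
theorem stmt_4 (n k j i : ℕ) (hn : 2 ≤ n) (hk2 : 2 ≤ k) (hk : k ≤ n - 1)
    (hj1 : 1 ≤ j) (hj : j ≤ n - k) (hi : i = aval n k + j) :
    cpair (gammaRoot n (k-1)) (gammaRoot n i) = 1 := by
  subst hi
  rw [SpinorAux.gamma_km1 hn k hk2 hk, SpinorAux.gamma_i hn k j hk2 hk hj1 hj]
  set c : ℝ := ((-1:ℝ))^n with hc
  have hcc : c * c = 1 := by
    rw [hc, ← pow_add]
    exact Even.neg_one_pow ⟨n, rfl⟩
  have h1 : dot (stdE (n-k) + c • stdE (n-1)) (stdE (n-k-j) + stdE (n-k) : Fin n → ℝ) = 1 := by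
    rw [SpinorAux.dot_add_left, SpinorAux.dot_add_right, SpinorAux.dot_add_right, SpinorAux.dot_smul_left, SpinorAux.dot_smul_left]
    rw [SpinorAux.dot_stdE_stdE (n-k) (n-k-j) (by omega), SpinorAux.dot_stdE_stdE (n-k) (n-k) (by omega),
      SpinorAux.dot_stdE_stdE (n-1) (n-k-j) (by omega), SpinorAux.dot_stdE_stdE (n-1) (n-k) (by omega)]
    rw [if_neg (by omega), if_pos rfl, if_neg (by omega), if_neg (by omega)]
    ring
  have h2 : dot (stdE (n-k) + c • stdE (n-1)) (stdE (n-k) + c • stdE (n-1) : Fin n → ℝ) = 2 := by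
    rw [SpinorAux.dot_add_left, SpinorAux.dot_add_right, SpinorAux.dot_add_right, SpinorAux.dot_smul_left, SpinorAux.dot_smul_left,
      SpinorAux.dot_smul_right, SpinorAux.dot_smul_right]
    rw [SpinorAux.dot_stdE_stdE (n-k) (n-k) (by omega), SpinorAux.dot_stdE_stdE (n-1) (n-k) (by omega),
      SpinorAux.dot_stdE_stdE (n-k) (n-1) (by omega), SpinorAux.dot_stdE_stdE (n-1) (n-1) (by omega)]
    rw [if_pos rfl, if_neg (by omega), if_neg (by omega), if_pos rfl]
    linear_combination hcc
  unfold cpair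
  rw [h1, h2]
  norm_num


end
end

section
/- Let V be an n-dimensional vector space and g: C → ℙ(V) a morphism from a smooth curve whose image is not contained in any linear subspace of codimension 2. Then there exist points P_1,…,P_{n-1} of C and a complete flag 0 = F_0 ⊂ F_1 ⊂ ⋯ ⊂ F_{n-1} ⊂ F_n = V such that g(P_i) ∈ F_{i+1} and g(P_i) ∉ F_i for all i ∈ [1, n−1]. -/
open Module Submodule

lemma aux_step14 {V : Type*} [AddCommGroup V] [Module ℂ V] [FiniteDimensional ℂ V]
    (p : Submodule ℂ V) (h : finrank ℂ p < finrank ℂ V) :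
    ∃ q : Submodule ℂ V, p ≤ q ∧ finrank ℂ q = finrank ℂ p + 1 := by
  obtain ⟨m, hm⟩ := p.exists_of_finrank_lt h
  have hm1 : m ∉ p := by simpa using hm 1 one_ne_zero
  have hm0 : m ≠ 0 := fun h => hm1 (h ▸ p.zero_mem)
  refine ⟨p ⊔ ℂ ∙ m, le_sup_left, ?_⟩
  have hinf : p ⊓ (ℂ ∙ m) = ⊥ := by
    rw [eq_bot_iff]
    rintro x ⟨hxp, hxm⟩
    simp only [SetLike.mem_coe, Submodule.mem_span_singleton] at hxm hxp ⊢
    obtain ⟨r, rfl⟩ := hxm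
    rcases eq_or_ne r 0 with rfl | hr
    · simp
    · exact absurd hxp (hm r hr)
  have h2 := Submodule.finrank_sup_add_finrank_inf_eq p (ℂ ∙ m)
  rw [hinf, finrank_bot, finrank_span_singleton hm0] at h2
  omega

lemma aux_ext14 {V : Type*} [AddCommGroup V] [Module ℂ V] [FiniteDimensional ℂ V]
    (p : Submodule ℂ V) (k : ℕ) (h1 : finrank ℂ p ≤ k) (h2 : k ≤ finrank ℂ V) :
    ∃ W : Submodule ℂ V, p ≤ W ∧ finrank ℂ W = k := by
  induction k with
  | zero => exact ⟨p, le_rfl, by omega⟩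
  | succ k ih =>
    rcases eq_or_lt_of_le h1 with heq | hlt
    · exact ⟨p, le_rfl, heq⟩
    · obtain ⟨W, hW, hWr⟩ := ih (by omega) (by omega)
      obtain ⟨q, hq, hqr⟩ := aux_step14 W (by omega)
      exact ⟨q, hW.trans hq, by omega⟩

open Finset in
/-- Let `V` be an `n`-dimensional complex vector space and `g : C → ℙ(V)` a morphism
from a smooth curve whose image is not contained in any linear subspace of codimension
`2`. Then there exist points `P_1,…,P_{n-1}` of `C` and a complete flag
`0 = F_0 ⊂ F_1 ⊂ ⋯ ⊂ F_{n-1} ⊂ F_n = V` such that `g(P_i) ∈ F_{i+1}` and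
`g(P_i) ∉ F_i` for all `i ∈ [1, n−1]`. -/
theorem stmt_14 (n : ℕ) (hn : 2 ≤ n) (V : Type*) [AddCommGroup V] [Module ℂ V]
    (hdim : Module.finrank ℂ V = n)
    (C : Type*) (g : C → Projectivization ℂ V)
    (hnd : ∀ W : Submodule ℂ V, Module.finrank ℂ W = n - 2 →
      ∃ c : C, ¬ (g c).submodule ≤ W) :
    ∃ (P : ℕ → C) (F : ℕ → Submodule ℂ V),
      F 0 = ⊥ ∧ F n = ⊤ ∧
      (∀ i ≤ n, Module.finrank ℂ (F i) = i) ∧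
      (∀ i < n, F i < F (i+1)) ∧
      ∀ i ∈ Finset.Icc 1 (n-1),
        (g (P i)).submodule ≤ F (i+1) ∧ ¬ (g (P i)).submodule ≤ F i := by
  have hfd : FiniteDimensional ℂ V := FiniteDimensional.of_finrank_pos (by omega)
  obtain ⟨m, rfl⟩ : ∃ m, n = m + 1 := ⟨n - 1, by omega⟩
  have hm1 : 1 ≤ m := by omega
  set T : Set V := ⋃ c, ((g c).submodule : Set V) with hT
  have hiSup : (⨆ c, (g c).submodule) = span ℂ T := Submodule.iSup_eq_span _
  have hSrank : m ≤ finrank ℂ (span ℂ T) := by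
    by_contra hcon
    push_neg at hcon
    obtain ⟨W, hSW, hWr⟩ := aux_ext14 (span ℂ T) (m + 1 - 2) (by omega) (by omega)
    obtain ⟨c, hc⟩ := hnd W hWr
    exact hc (le_trans (le_trans (le_iSup (fun c => (g c).submodule) c) hiSup.le) hSW)
  -- extract an independent family of m vectors from T
  obtain ⟨b, hbT, hbspan, hbind⟩ := exists_linearIndependent ℂ T
  have hbfin : b.Finite := hbind.setFinite
  haveI := hbfin.fintype
  have hbcard : m ≤ b.toFinset.card := by
    rwa [← hbspan, finrank_span_set_eq_card hbind] at hSrank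
  obtain ⟨s, hsb, hscard⟩ := Finset.exists_subset_card_eq hbcard
  let e : s ≃ Fin m := s.equivFinOfCardEq hscard
  let v : Fin m → V := fun i => (e.symm i : V)
  have hvmem : ∀ i, (v i : V) ∈ b := fun i => by
    simpa using hsb (e.symm i).2
  have hv : LinearIndependent ℂ v := by
    have hinj : Function.Injective (fun i : Fin m => (⟨(e.symm i : V), hvmem i⟩ : b)) := by
      intro i j hij
      have h2 : (e.symm i : V) = (e.symm j : V) := by simpa using hij
      exact e.symm.injective (Subtype.ext h2)
    exact hbind.comp _ hinj
  have hvne : ∀ i, v i ≠ 0 := fun i => hv.ne_zero i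
  have hvT : ∀ i, v i ∈ T := fun i => hbT (hvmem i)
  choose c_ hc_ using fun i => Set.mem_iUnion.mp (hvT i)
  have hline : ∀ i, (g (c_ i)).submodule = ℂ ∙ v i := by
    intro i
    have h1 := (g (c_ i)).submodule_eq
    have h2 : v i ∈ (ℂ ∙ (g (c_ i)).rep) := by
      have := hc_ i; rwa [h1] at this
    rw [Submodule.mem_span_singleton] at h2
    obtain ⟨a, ha⟩ := h2
    have ha0 : IsUnit a := by
      rw [isUnit_iff_ne_zero]
      rintro rfl
      rw [zero_smul] at ha
      exact hvne i ha.symm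
    rw [h1, ← ha, Submodule.span_singleton_smul_eq ha0]
  -- pick a vector outside the span of the `v i`
  have hrange : finrank ℂ (span ℂ (Set.range v)) = m := by
    rw [finrank_span_eq_card hv, Fintype.card_fin]
  have hnetop : span ℂ (Set.range v) < ⊤ := lt_top_iff_ne_top.mpr (by
    intro h; rw [h, finrank_top, hdim] at hrange; omega)
  obtain ⟨x, -, hx⟩ := SetLike.exists_of_lt hnetop
  set w : Fin (m + 1) → V := Fin.cons x v with hwdef
  have hw : LinearIndependent ℂ w := hv.fin_cons hx
  have hwinj : Function.Injective w := hw.injective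
  refine ⟨fun i => if h : i - 1 < m then c_ ⟨i - 1, h⟩ else c_ ⟨0, hm1⟩,
    fun i => span ℂ (w '' {j : Fin (m + 1) | (j : ℕ) < i}), ?_, ?_, ?_, ?_, ?_⟩
  · beta_reduce
    have h0 : {j : Fin (m + 1) | (j : ℕ) < 0} = ∅ := by
      ext j; simp
    rw [h0, Set.image_empty, span_empty]
  · beta_reduce
    have h0 : w '' {j : Fin (m + 1) | (j : ℕ) < m + 1} = Set.range w := by
      ext y
      simp only [Set.mem_image, Set.mem_setOf_eq, Set.mem_range]
      exact ⟨fun ⟨j, _, hj⟩ => ⟨j, hj⟩, fun ⟨j, hj⟩ => ⟨j, j.isLt, hj⟩⟩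
    rw [h0]
    exact hw.span_eq_top_of_card_eq_finrank (by simp [hdim])
  · intro i hi
    beta_reduce
    have hset : w '' {j : Fin (m + 1) | (j : ℕ) < i} = Set.range (w ∘ Fin.castLE hi) := by
      ext y
      simp only [Set.mem_image, Set.mem_setOf_eq, Set.mem_range, Function.comp_apply]
      constructor
      · rintro ⟨j, hj, rfl⟩
        exact ⟨⟨(j : ℕ), hj⟩, congrArg w (Fin.ext rfl)⟩
      · rintro ⟨k, rfl⟩
        exact ⟨Fin.castLE hi k, k.isLt, rfl⟩
    rw [hset, finrank_span_eq_card (hw.comp _ (Fin.castLE_injective hi)), Fintype.card_fin]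
  · intro i hi
    beta_reduce
    have hle : span ℂ (w '' {j : Fin (m + 1) | (j : ℕ) < i}) ≤
        span ℂ (w '' {j : Fin (m + 1) | (j : ℕ) < i + 1}) :=
      span_mono (Set.image_mono fun j hj => Nat.lt_succ_of_lt hj)
    refine lt_of_le_of_ne hle (fun heq => ?_)
    have hmem : w ⟨i, hi⟩ ∈ span ℂ (w '' {j : Fin (m + 1) | (j : ℕ) < i + 1}) :=
      subset_span ⟨⟨i, hi⟩, Nat.lt_succ_self i, rfl⟩
    rw [← heq] at hmem
    exact hw.notMem_span_image (by simp) hmem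
  · intro i hi
    beta_reduce
    rw [Finset.mem_Icc] at hi
    obtain ⟨hi1, hi2⟩ := hi
    have hi2' : i - 1 < m := by omega
    have hPi : (if h : i - 1 < m then c_ ⟨i - 1, h⟩ else c_ ⟨0, hm1⟩) = c_ ⟨i - 1, hi2'⟩ :=
      dif_pos hi2'
    rw [hPi, hline]
    have hwv : w ((⟨i - 1, hi2'⟩ : Fin m).succ) = v ⟨i - 1, hi2'⟩ := Fin.cons_succ _ _ _
    have hval : (((⟨i - 1, hi2'⟩ : Fin m).succ : Fin (m + 1)) : ℕ) = i := by
      simp [Fin.succ]; omega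
    constructor
    · rw [Submodule.span_singleton_le_iff_mem, ← hwv]
      exact subset_span ⟨_, by rw [Set.mem_setOf_eq, hval]; omega, rfl⟩
    · intro hle
      have hmem : v ⟨i - 1, hi2'⟩ ∈ span ℂ (w '' {j : Fin (m + 1) | (j : ℕ) < i}) :=
        hle (Submodule.mem_span_singleton_self _)
      rw [← hwv] at hmem
      refine hw.notMem_span_image ?_ hmem
      rw [Set.mem_setOf_eq, hval]
      omega
end
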